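/- Assume q ≥ 7. Let γ ∈ k satisfy γ^q = γ, γ^{(q−1)/2} = 1 and γ ∉ {1, −1}, and let f = X^{(q+1)/2} − γ·X^{−(q+1)/2} ∈ k(X). Then the field extension k(X) over the intermediate field k(f) generated by f over k is a Galois extension, and its Galois group is isomorphic to the dihedral group of order q+1 (DihedralGroup ((q+1)/2)). (This is the field-theoretic content of the statement that P₁ = (0:1:0) is an outer Galois point for the curve C₄ parametrized by (s:t) ↦ (s^{(q+1)/2}t^{(q+1)/2} : (s+t)^{(q+1)/2}(s+γt)^{(q+1)/2} : s^{q+1} − γt^{q+1}), with Galois group D_{q+1}.) -/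

import Mathlib

/-!
Write `n = (q + 1) / 2`. Since `p ∤ n`, the field `k` contains a primitive `n`-th root of unity `ζ`;
choose `c` with `c ^ n = -γ`. The substitutions `X ↦ ζ ^ i X` and `X ↦ c ζ ^ i / X` form a copy of
the dihedral group of order `2n` inside `Aut(k(X)/k)`, and all of them fix `f = (X ^ 2n - γ) / X ^ n`.
As `X ^ 2n - γ` and `X ^ n` are coprime, `[k(X) : k(f)] = 2n`, so this group is the whole of
`Aut(k(X)/k(f))` and the extension is Galois.
-/

open IntermediateField

theorem Transcendental.algebraMap_mul {K A : Type*} [Field K] [CommRing A] [Algebra K A] {r : A}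
    (hr : Transcendental K r) {a : K} (ha : a ≠ 0) : Transcendental K (algebraMap K A a * r) := by
  have := hr.aeval (Polynomial.C a * Polynomial.X)
    (by rw [Polynomial.natDegree_C_mul_X a ha]; exact one_ne_zero)
    (by simpa using mem_nonZeroDivisors_of_ne_zero ha)
  rwa [map_mul, Polynomial.aeval_C, Polynomial.aeval_X] at this

theorem isGalois_and_bijective_of_injective_of_finrank_eq {F L G : Type*} [Field F] [Field L]
    [Algebra F L] [Group G] [Finite G] (ψ : G →* (L ≃ₐ[F] L)) (hψ : Function.Injective ψ)
    (h : Module.finrank F L = Nat.card G) : IsGalois F L ∧ Function.Bijective ψ := by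
  have : FiniteDimensional F L := Module.finite_of_finrank_pos (h ▸ Nat.card_pos)
  have hle : Nat.card (L ≃ₐ[F] L) ≤ Module.finrank F L :=
    (Nat.card_le_card_of_injective _ AlgEquiv.coe_toAlgHom_injective).trans
      (card_algHom_le_finrank F L L)
  have hge : Nat.card G ≤ Nat.card (L ≃ₐ[F] L) := Nat.card_le_card_of_injective ψ hψ
  exact ⟨IsGalois.of_card_aut_eq_finrank F L (by omega), hψ.bijective_of_nat_card_le (by omega)⟩

theorem exists_injective_monoidHom_algEquiv_adjoin_simple {K L G : Type*} [Field K] [Field L]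
    [Algebra K L] [Group G] (φ : G →* (L ≃ₐ[K] L)) (hφ : Function.Injective φ) {x : L}
    (hx : ∀ g, φ g x = x) : ∃ ψ : G →* (L ≃ₐ[K⟮x⟯] L), Function.Injective ψ := by
  have hfix : φ.range ≤ K⟮x⟯.fixingSubgroup := by
    rw [← le_iff_le, adjoin_simple_le_iff]
    rintro ⟨_, g, rfl⟩
    exact hx g
  refine ⟨K⟮x⟯.fixingSubgroupEquiv.toMonoidHom.comp
    (φ.codRestrict _ fun g => hfix ⟨g, rfl⟩), ?_⟩
  exact K⟮x⟯.fixingSubgroupEquiv.injective.comp fun g h hgh => hφ (congrArg Subtype.val hgh)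

namespace ZMod

variable {M : Type*} [Monoid M] {n : ℕ} {ζ : M}

theorem pow_val_add [NeZero n] (hζ : ζ ^ n = 1) (i j : ZMod n) :
    ζ ^ (i + j).val = ζ ^ i.val * ζ ^ j.val := by
  rw [ZMod.val_add, ← pow_eq_pow_mod _ hζ, pow_add]

theorem pow_val_sub_mul [NeZero n] (hζ : ζ ^ n = 1) (i j : ZMod n) :
    ζ ^ (j - i).val * ζ ^ i.val = ζ ^ j.val := by
  rw [← pow_val_add hζ, sub_add_cancel]

theorem pow_val_pow (hζ : ζ ^ n = 1) (i : ZMod n) : (ζ ^ i.val) ^ n = 1 := by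
  rw [← pow_mul, mul_comm, pow_mul, hζ, one_pow]

end ZMod

namespace RatFunc

variable {K : Type*} [Field K]

theorem algHom_ext {L : Type*} [Field L] [Algebra K L] {φ ψ : RatFunc K →ₐ[K] L}
    (h : φ X = ψ X) : φ = ψ :=
  IsLocalization.algHom_ext (nonZeroDivisors (Polynomial K))
    (Polynomial.algHom_ext (by simpa [Algebra.algHom, ← algebraMap_X] using h))

theorem transcendental_X_inv : Transcendental K (X⁻¹ : RatFunc K) :=
  fun h => transcendental_X (IsAlgebraic.inv_iff.mp h)

noncomputable def substAlgHom (g : RatFunc K) (hg : Transcendental K g) :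
    RatFunc K →ₐ[K] RatFunc K :=
  (IntermediateField.val _).comp (algEquivOfTranscendental g hg).toAlgHom

@[simp] theorem substAlgHom_C (g : RatFunc K) (hg : Transcendental K g) (a : K) :
    substAlgHom g hg (C a) = C a := by
  simpa [algebraMap_eq_C] using (substAlgHom g hg).commutes a

@[simp] theorem substAlgHom_X (g : RatFunc K) (hg : Transcendental K g) :
    substAlgHom g hg X = g := by
  simp [substAlgHom]

theorem associated_num_div_of_isCoprime {p q : Polynomial K} (hq : q ≠ 0) (h : IsCoprime p q) :
    Associated (algebraMap _ (RatFunc K) p / algebraMap _ _ q).num p := by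
  have hcross := (num_mul_eq_mul_denom_iff (p := p) hq).mpr rfl
  exact associated_of_dvd_dvd (num_div_dvd p hq) (h.dvd_of_dvd_mul_right ⟨_, hcross⟩)

theorem associated_denom_div_of_isCoprime {p q : Polynomial K} (hq : q ≠ 0) (h : IsCoprime p q) :
    Associated (algebraMap _ (RatFunc K) p / algebraMap _ _ q).denom q := by
  have hcross := (num_mul_eq_mul_denom_iff (p := p) hq).mpr rfl
  exact associated_of_dvd_dvd (denom_div_dvd p q)
    (h.symm.dvd_of_dvd_mul_left ⟨_, hcross.symm.trans (mul_comm _ _)⟩)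

theorem finrank_adjoin_X_pow_sub_C_mul_inv {n : ℕ} (hn : n ≠ 0) {γ : K} (hγ : γ ≠ 0) :
    Module.finrank K⟮(X ^ n - C γ * (X ^ n)⁻¹ : RatFunc K)⟯ (RatFunc K) = 2 * n := by
  set p : Polynomial K := Polynomial.X ^ (2 * n) - Polynomial.C γ
  set q : Polynomial K := Polynomial.X ^ n
  have hq : q ≠ 0 := pow_ne_zero _ Polynomial.X_ne_zero
  have hf : (X ^ n - C γ * (X ^ n)⁻¹ : RatFunc K) = algebraMap _ _ p / algebraMap _ _ q := by
    simp only [p, q, map_sub, map_pow, algebraMap_X, algebraMap_C]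
    field_simp
    ring
  have hpq : IsCoprime p q := by
    refine IsCoprime.pow_right (Polynomial.irreducible_X.coprime_iff_not_dvd.mpr ?_).symm
    rw [Polynomial.X_dvd_iff]
    simp [p, hn, hγ]
  rw [hf, finrank_eq_max_natDegree,
    Polynomial.natDegree_eq_of_degree_eq (Polynomial.degree_eq_degree_of_associated
      (associated_num_div_of_isCoprime hq hpq)),
    Polynomial.natDegree_eq_of_degree_eq (Polynomial.degree_eq_degree_of_associated
      (associated_denom_div_of_isCoprime hq hpq)),
    Polynomial.natDegree_X_pow_sub_C, Polynomial.natDegree_X_pow]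
  omega

end RatFunc

namespace DihedralGroup

open RatFunc

variable {K : Type*} [Field K] {n : ℕ}

noncomputable def substX (ζ c : K) : DihedralGroup n → RatFunc K
  | r i => C (ζ ^ i.val) * X
  | sr i => C (c * ζ ^ i.val) * X⁻¹

theorem transcendental_substX {ζ c : K} (hζ : ζ ≠ 0) (hc : c ≠ 0) (g : DihedralGroup n) :
    Transcendental K (substX ζ c g) := by
  rcases g with i | i
  · simpa [substX, algebraMap_eq_C] using transcendental_X.algebraMap_mul (pow_ne_zero i.val hζ)
  · simpa [substX, algebraMap_eq_C] using
      transcendental_X_inv.algebraMap_mul (mul_ne_zero hc (pow_ne_zero i.val hζ))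

theorem substAlgHom_substX [NeZero n] {ζ c : K} (hζ : ζ ^ n = 1) (hζ0 : ζ ≠ 0) (hc : c ≠ 0)
    (g h : DihedralGroup n) :
    substAlgHom _ (transcendental_substX hζ0 hc g) (substX ζ c h) = substX ζ c (g * h) := by
  have hCc : C c ≠ 0 := (map_ne_zero C).mpr hc
  have hCζ (i : ZMod n) : C (ζ ^ i.val) ≠ 0 := (map_ne_zero C).mpr (pow_ne_zero _ hζ0)
  rcases g with i | i <;> rcases h with j | j <;>
    simp only [substX, r_mul_r, r_mul_sr, sr_mul_r, sr_mul_sr, map_mul, map_inv₀, substAlgHom_X,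
      substAlgHom_C]
  · rw [ZMod.pow_val_add hζ, map_mul]; ring
  · rw [← ZMod.pow_val_sub_mul hζ i j, map_mul]
    have := hCζ i
    field_simp
  · rw [ZMod.pow_val_add hζ, map_mul]; ring
  · rw [← ZMod.pow_val_sub_mul hζ i j, map_mul]
    have := hCζ i
    field_simp

variable [NeZero n] {ζ c : K} (hζ : IsPrimitiveRoot ζ n) (hc : c ≠ 0)

noncomputable def toRatFuncEnd : DihedralGroup n →* (RatFunc K →ₐ[K] RatFunc K) where
  toFun g := substAlgHom _ (transcendental_substX (hζ.ne_zero (NeZero.ne n)) hc g)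
  map_one' := RatFunc.algHom_ext <| by
    rw [substAlgHom_X, AlgHom.one_apply, one_def, substX, ZMod.val_zero, pow_zero, map_one, one_mul]
  map_mul' g h := RatFunc.algHom_ext <| by
    rw [AlgHom.mul_apply, substAlgHom_X, substAlgHom_X,
      substAlgHom_substX hζ.pow_eq_one (hζ.ne_zero (NeZero.ne n)) hc]

noncomputable def toRatFuncAut : DihedralGroup n →* (RatFunc K ≃ₐ[K] RatFunc K) :=
  (AlgEquiv.algHomUnitsEquiv K _).toMonoidHom.comp (toRatFuncEnd hζ hc).toHomUnits

theorem toRatFuncAut_apply (g : DihedralGroup n) (x : RatFunc K) :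
    toRatFuncAut hζ hc g x =
      substAlgHom _ (transcendental_substX (hζ.ne_zero (NeZero.ne n)) hc g) x :=
  rfl

theorem toRatFuncAut_injective : Function.Injective (toRatFuncAut hζ hc) := by
  rw [injective_iff_map_eq_one]
  intro g hg
  have hζ0 := hζ.ne_zero (NeZero.ne n)
  have hX := congrArg (· X) hg
  simp only [toRatFuncAut_apply, substAlgHom_X, AlgEquiv.one_apply] at hX
  rcases g with i | i
  · have h1 : C (ζ ^ i.val) = 1 := mul_right_cancel₀ X_ne_zero (hX.trans (one_mul X).symm)
    rw [← map_one C, (C : K →+* RatFunc K).injective.eq_iff, hζ.pow_eq_one_iff_dvd] at h1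
    rw [(ZMod.val_eq_zero i).mp (Nat.eq_zero_of_dvd_of_lt h1 i.val_lt)]
    rfl
  · have hC : C (c * ζ ^ i.val) ≠ 0 := (map_ne_zero C).mpr (mul_ne_zero hc (pow_ne_zero _ hζ0))
    have h := congrArg intDegree hX
    rw [substX, intDegree_mul hC (inv_ne_zero X_ne_zero), intDegree_C, intDegree_inv,
      intDegree_X] at h
    omega

theorem toRatFuncAut_apply_X_pow_sub_C_mul_inv {γ : K} (hcγ : c ^ n = -γ) (g : DihedralGroup n) :
    toRatFuncAut hζ hc g (X ^ n - C γ * (X ^ n)⁻¹) = X ^ n - C γ * (X ^ n)⁻¹ := by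
  simp only [toRatFuncAut_apply, map_sub, map_mul, map_pow, map_inv₀, substAlgHom_X,
    substAlgHom_C]
  rcases g with i | i <;>
    simp only [substX, mul_pow, ← map_pow, ZMod.pow_val_pow hζ.pow_eq_one, map_one, one_mul,
      mul_one]
  have hγ : C γ ≠ 0 :=
    (map_ne_zero C).mpr (by rw [ne_eq, ← neg_eq_zero, ← hcγ]; exact pow_ne_zero n hc)
  rw [hcγ, map_neg, inv_pow]
  field_simp
  ring

end DihedralGroup

namespace RatFunc

variable {K : Type*} [Field K]

theorem isGalois_and_nonempty_mulEquiv_dihedralGroup {n : ℕ} [NeZero n] {ζ : K}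
    (hζ : IsPrimitiveRoot ζ n) {c γ : K} (hcγ : c ^ n = -γ) (hγ : γ ≠ 0) :
    IsGalois K⟮(X ^ n - C γ * (X ^ n)⁻¹ : RatFunc K)⟯ (RatFunc K) ∧
      Nonempty ((RatFunc K ≃ₐ[K⟮(X ^ n - C γ * (X ^ n)⁻¹ : RatFunc K)⟯] RatFunc K) ≃*
        DihedralGroup n) := by
  have hc : c ≠ 0 := by
    rintro rfl
    exact hγ (by simpa [zero_pow (NeZero.ne n)] using hcγ)
  obtain ⟨ψ, hψ⟩ := exists_injective_monoidHom_algEquiv_adjoin_simple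
    (DihedralGroup.toRatFuncAut hζ hc) (DihedralGroup.toRatFuncAut_injective hζ hc)
    (DihedralGroup.toRatFuncAut_apply_X_pow_sub_C_mul_inv hζ hc hcγ)
  obtain ⟨hgal, hbij⟩ := isGalois_and_bijective_of_injective_of_finrank_eq ψ hψ
    (by rw [finrank_adjoin_X_pow_sub_C_mul_inv (NeZero.ne n) hγ, DihedralGroup.nat_card])
  exact ⟨hgal, ⟨(MulEquiv.ofBijective ψ hbij).symm⟩⟩

end RatFunc

theorem Nat.Prime.not_dvd_pow_add_one_div_two {p e : ℕ} (hp : p.Prime) (hp2 : p ≠ 2)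
    (he : e ≠ 0) : ¬ p ∣ (p ^ e + 1) / 2 := by
  intro h
  have h2 : 2 * ((p ^ e + 1) / 2) = p ^ e + 1 := by
    obtain ⟨m, hm⟩ := (hp.odd_of_ne_two hp2).pow (n := e)
    omega
  have : p ∣ p ^ e + 1 := h2 ▸ h.mul_left 2
  exact hp.one_lt.ne' (Nat.dvd_one.mp ((Nat.dvd_add_right (dvd_pow_self p he)).mp this))

theorem stmt_16_general (p e q : ℕ) (hp : p.Prime) (hp2 : p ≠ 2) (hq : q = p ^ e) (hq7 : 7 ≤ q)
    (k : Type*) [Field k] [IsAlgClosed k] [CharP k p]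
    (γ : k) (hγsq : γ ^ ((q - 1) / 2) = 1)
    (f : RatFunc k)
    (hf : f = RatFunc.X ^ ((q + 1) / 2) - RatFunc.C γ * (RatFunc.X ^ ((q + 1) / 2))⁻¹) :
    IsGalois (IntermediateField.adjoin k {f}) (RatFunc k) ∧
      Nonempty ((RatFunc k ≃ₐ[IntermediateField.adjoin k {f}] RatFunc k) ≃*
        DihedralGroup ((q + 1) / 2)) := by
  subst hf
  have he : e ≠ 0 := by
    rintro rfl
    rw [pow_zero] at hq
    omega
  have : NeZero ((((q + 1) / 2 : ℕ)) : k) := ⟨by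
    rw [Ne, CharP.cast_eq_zero_iff k p, hq]
    exact hp.not_dvd_pow_add_one_div_two hp2 he⟩
  have : NeZero ((q + 1) / 2) := ⟨by omega⟩
  obtain ⟨ζ, hζ⟩ := HasEnoughRootsOfUnity.exists_primitiveRoot k ((q + 1) / 2)
  obtain ⟨c, hc⟩ := IsAlgClosed.exists_pow_nat_eq (-γ) (n := (q + 1) / 2) (by omega)
  have hγ : γ ≠ 0 := by
    rintro rfl
    exact zero_ne_one ((zero_pow (by omega : (q - 1) / 2 ≠ 0)).symm.trans hγsq)
  exact RatFunc.isGalois_and_nonempty_mulEquiv_dihedralGroup hζ hc hγ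

/-- For `q ≥ 7`, `γ ∈ 𝔽_q \ {±1}` with `γ^((q-1)/2) = 1`, and
`f = X^((q+1)/2) − γ·X^(-(q+1)/2) ∈ k(X)`, the extension `k(X)/k(f)` is Galois with
Galois group isomorphic to the dihedral group of order `q + 1`. -/
theorem stmt_16 (p e q : ℕ) (hp : p.Prime) (hp2 : p ≠ 2) (hq : q = p ^ e) (hq7 : 7 ≤ q)
    (k : Type*) [Field k] [IsAlgClosed k] [CharP k p]
    (γ : k) (hγq : γ ^ q = γ) (hγsq : γ ^ ((q - 1) / 2) = 1) (hγ1 : γ ≠ 1) (hγm1 : γ ≠ -1)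
    (f : RatFunc k)
    (hf : f = RatFunc.X ^ ((q + 1) / 2) - RatFunc.C γ * (RatFunc.X ^ ((q + 1) / 2))⁻¹) :
    IsGalois (IntermediateField.adjoin k {f}) (RatFunc k) ∧
      Nonempty ((RatFunc k ≃ₐ[IntermediateField.adjoin k {f}] RatFunc k) ≃*
        DihedralGroup ((q + 1) / 2)) :=
  stmt_16_general p e q hp hp2 hq hq7 k γ hγsq f hf
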